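/- arXiv:2503.21754 — 4 statements merged into one kernel-verified Lean document; each statement's English description precedes it below -/
import Mathlib

section
/- Let A be any ring, R an A-algebra, and I an ideal of R. For all integers n ≥ t ≥ 1, one has the containment (R ⊗_A I^n)·P^t_{R|A} ⊆ (I^{n−t} ⊗_A R)·P^t_{R|A} of R⊗_A R-submodules of P^t_{R|A}, where by convention I^m = R for m ≤ 0. -/
open TensorProduct

/-- The module of principal parts `P^n_{R|A} = (R ⊗[A] R)/Δ^{n+1}`. -/
abbrev PrincipalParts (A : Type*) [CommRing A] (R : Type*) [CommRing R] [Algebra A R]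
    (n : ℕ) : Type _ :=
  (R ⊗[A] R) ⧸ (KaehlerDifferential.ideal A R ^ (n + 1))

/-- A sharpened `sup_pow_add_le_pow_sup_pow`: `(I ⊔ J)^(a+b) ≤ I^a ⊔ J^(b+1)`. -/
lemma sup_pow_add_le_pow_sup_pow_succ {R : Type*} [CommRing R] {I J : Ideal R} {a b : ℕ} :
    (I ⊔ J) ^ (a + b) ≤ I ^ a ⊔ J ^ (b + 1) := by
  rw [← Ideal.add_eq_sup, ← Ideal.add_eq_sup, add_pow, Ideal.sum_eq_sup]
  apply Finset.sup_le
  intro i hi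
  by_cases hn : a ≤ i
  · exact Ideal.mul_le_left.trans (Ideal.mul_le_left.trans
      ((Ideal.pow_le_pow_right hn).trans le_sup_left))
  · refine Ideal.mul_le_left.trans (Ideal.mul_le_right.trans
      ((Ideal.pow_le_pow_right ?_).trans le_sup_right))
    simp only [Finset.mem_range] at hi
    omega

/-- For an ideal `I` of an `A`-algebra `R` and `n ≥ t ≥ 1`, one has
`(R ⊗_A I^n)·P^t_{R|A} ⊆ (I^{n-t} ⊗_A R)·P^t_{R|A}` inside `P^t_{R|A}`.
Here `I ⊗_A J` denotes the ideal of `R ⊗[A] R` generated by the simple tensors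
`f ⊗ g` with `f ∈ I`, `g ∈ J`, and the convention `I^m = R` for `m ≤ 0` is
realised by the truncated subtraction `n - t` in `ℕ`. -/
theorem tensor_pow_mul_principalParts_le
    (A : Type*) [CommRing A] (R : Type*) [CommRing R] [Algebra A R]
    (I : Ideal R) (n t : ℕ) (ht : 1 ≤ t) (htn : t ≤ n) :
    Ideal.map (Ideal.Quotient.mk (KaehlerDifferential.ideal A R ^ (t + 1)))
        (Ideal.map (Algebra.TensorProduct.includeRight : R →ₐ[A] R ⊗[A] R) (I ^ n)) ≤
      Ideal.map (Ideal.Quotient.mk (KaehlerDifferential.ideal A R ^ (t + 1)))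
        (Ideal.map (Algebra.TensorProduct.includeLeft : R →ₐ[A] R ⊗[A] R)
          (I ^ (n - t))) := by
  set D := KaehlerDifferential.ideal A R
  set J := Ideal.map (Algebra.TensorProduct.includeLeft : R →ₐ[A] R ⊗[A] R) I
  set K := Ideal.map (Algebra.TensorProduct.includeRight : R →ₐ[A] R ⊗[A] R) I
  have hKJD : K ≤ J ⊔ D := by
    rw [Ideal.map_le_iff_le_comap]
    intro f hf
    have h1 : (f ⊗ₜ[A] (1 : R) : R ⊗[A] R) ∈ J :=
      Ideal.mem_map_of_mem (Algebra.TensorProduct.includeLeft : R →ₐ[A] R ⊗[A] R) hf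
    have h2 : ((1 : R) ⊗ₜ[A] f - f ⊗ₜ[A] (1 : R) : R ⊗[A] R) ∈ D :=
      KaehlerDifferential.one_smul_sub_smul_one_mem_ideal A f
    have : ((1 : R) ⊗ₜ[A] f : R ⊗[A] R) ∈ J ⊔ D := by
      have := Submodule.add_mem (J ⊔ D) (Ideal.mem_sup_left h1) (Ideal.mem_sup_right h2)
      simpa using this
    simpa [Ideal.mem_comap] using this
  have key : Ideal.map (Algebra.TensorProduct.includeRight : R →ₐ[A] R ⊗[A] R) (I ^ n)
      ≤ Ideal.map (Algebra.TensorProduct.includeLeft : R →ₐ[A] R ⊗[A] R) (I ^ (n - t))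
        ⊔ D ^ (t + 1) := by
    rw [Ideal.map_pow, Ideal.map_pow]
    calc K ^ n ≤ (J ⊔ D) ^ n := Ideal.pow_right_mono hKJD n
      _ = (J ⊔ D) ^ ((n - t) + t) := by rw [Nat.sub_add_cancel htn]
      _ ≤ J ^ (n - t) ⊔ D ^ (t + 1) := sup_pow_add_le_pow_sup_pow_succ
  refine le_trans (Ideal.map_mono key) ?_
  rw [Ideal.map_sup]
  simp [Ideal.map_quotient_self]
end

section
/- Let A be any ring and (R, 𝔪, k) a local A-algebra. Let d: R → P^n_{R|A} be the universal differential operator of order n, and let d̄: R/𝔪^{n+1} → k ⊗_R P^n_{R|A} be the map induced by d. If the image of A in R/𝔪^{n+1} is contained in a coefficient field of R/𝔪^{n+1} (a subfield mapping isomorphically onto the residue field), then d̄ is injective. -/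
open TensorProduct

set_option maxHeartbeats 1000000
set_option synthInstance.maxHeartbeats 400000

/-- The universal differential operator `d : R → P^n_{R|A}`, `r ↦ 1 ⊗ r`. -/
noncomputable def univDiffOp (A : Type*) [CommRing A] (R : Type*) [CommRing R]
    [Algebra A R] (n : ℕ) : R → PrincipalParts A R n :=
  fun r => Ideal.Quotient.mk _ ((1 : R) ⊗ₜ[A] r)

/-- Let `(R, 𝔪, k)` be a local `A`-algebra.  If the image of `A` in `R/𝔪^{n+1}` is
contained in a coefficient field of `R/𝔪^{n+1}` (a subring which is a field and maps
bijectively onto the residue field), then the map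
`d̄ : R/𝔪^{n+1} → k ⊗_R P^n_{R|A}` induced by the universal differential operator is
injective; equivalently, its kernel condition holds: if `1 ⊗ d(f) = 0` then
`f ∈ 𝔪^{n+1}`. -/
theorem univDiffOp_residue_injective
    (A : Type*) [CommRing A] (R : Type*) [CommRing R] [Algebra A R] [IsLocalRing R]
    (n : ℕ)
    (hcoeff : ∃ C : Subring (R ⧸ (IsLocalRing.maximalIdeal R) ^ (n + 1)),
      IsField C ∧
      Function.Bijective (fun c : C =>
        Ideal.Quotient.factor (Ideal.pow_le_self (Nat.succ_ne_zero n) :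
            (IsLocalRing.maximalIdeal R) ^ (n + 1) ≤ IsLocalRing.maximalIdeal R)
          (c : R ⧸ (IsLocalRing.maximalIdeal R) ^ (n + 1))) ∧
      ∀ a : A,
        algebraMap A (R ⧸ (IsLocalRing.maximalIdeal R) ^ (n + 1)) a ∈ C) :
    ∀ f : R,
      ((1 : R ⧸ IsLocalRing.maximalIdeal R) ⊗ₜ[R] univDiffOp A R n f :
        (R ⧸ IsLocalRing.maximalIdeal R) ⊗[R] PrincipalParts A R n) = 0 →
      f ∈ (IsLocalRing.maximalIdeal R) ^ (n + 1) := by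
  obtain ⟨C, hC, hbij, hA⟩ := hcoeff
  intro f hf
  let 𝔪 := IsLocalRing.maximalIdeal R
  let S := R ⧸ 𝔪 ^ (n + 1)
  let k := R ⧸ 𝔪
  let q : S →+* k :=
    Ideal.Quotient.factor (Ideal.pow_le_self (Nat.succ_ne_zero n) : 𝔪 ^ (n + 1) ≤ 𝔪)
  let e : C →+* k := q.comp C.subtype
  have he : Function.Bijective e := hbij
  let ε : C ≃+* k := RingEquiv.ofBijective e he
  let t : k →+* S := C.subtype.comp (ε.symm : k →+* C)
  have hqt : ∀ x : k, q (t x) = x := fun x => ε.apply_symm_apply x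
  let ρ : R →+* k := Ideal.Quotient.mk 𝔪
  let s : R →+* S := t.comp ρ
  have hqs : ∀ r : R, q (s r) = ρ r := fun r => hqt (ρ r)
  have hsC : ∀ r : R, s r ∈ C := fun r => (ε.symm (ρ r)).2
  -- `s` agrees with the quotient map on the image of `A`
  have key : ∀ a : A, s (algebraMap A R a) = algebraMap A S a := by
    intro a
    have htower : algebraMap A S a = Ideal.Quotient.mk (𝔪 ^ (n + 1)) (algebraMap A R a) := by
      rw [IsScalarTower.algebraMap_apply A R S, Ideal.Quotient.algebraMap_eq]
    have h1 : algebraMap A S a ∈ C := hA a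
    have h2 : e ⟨s (algebraMap A R a), hsC _⟩ = e ⟨algebraMap A S a, h1⟩ := by
      show q (s (algebraMap A R a)) = q (algebraMap A S a)
      rw [hqs, htower, Ideal.Quotient.factor_mk]
    exact congrArg Subtype.val (he.1 h2)
  let s' : R →ₐ[A] S := { s with commutes' := key }
  let π' : R →ₐ[A] S := Ideal.Quotient.mkₐ A (𝔪 ^ (n + 1))
  let μ : R ⊗[A] R →ₐ[A] S := Algebra.TensorProduct.productMap s' π'
  have hμ_tmul : ∀ x y : R, μ (x ⊗ₜ[A] y) = s x * Ideal.Quotient.mk (𝔪 ^ (n + 1)) y :=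
    fun x y => rfl
  -- `q ∘ μ` is the residue of the multiplication map
  have hcomm : ∀ y : R ⊗[A] R,
      q (μ y) = ρ ((Algebra.TensorProduct.lmul' A : R ⊗[A] R →ₐ[A] R) y) := by
    intro y
    induction y using TensorProduct.induction_on with
    | zero => simp
    | tmul a b =>
        rw [hμ_tmul, map_mul, hqs, Algebra.TensorProduct.lmul'_apply_tmul, map_mul]
        congr 1
    | add x y hx hy => rw [map_add, map_add, map_add, map_add, hx, hy]
  have hker : (KaehlerDifferential.ideal A R) ^ (n + 1)
      ≤ RingHom.ker (μ : R ⊗[A] R →+* S) := by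
    have hΔ : Ideal.map (μ : R ⊗[A] R →+* S) (KaehlerDifferential.ideal A R)
        ≤ RingHom.ker q := by
      rw [Ideal.map_le_iff_le_comap]
      intro x hx
      have hx0 : (Algebra.TensorProduct.lmul' A : R ⊗[A] R →ₐ[A] R) x = 0 := hx
      simp only [Ideal.mem_comap, RingHom.mem_ker]
      rw [show ((μ : R ⊗[A] R →+* S)) x = μ x from rfl, hcomm, hx0, map_zero]
    have hbot : (RingHom.ker q) ^ (n + 1) = ⊥ := by
      have hle : RingHom.ker q ≤ Ideal.map (Ideal.Quotient.mk (𝔪 ^ (n + 1))) 𝔪 := by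
        intro x hx
        obtain ⟨r, rfl⟩ := Ideal.Quotient.mk_surjective x
        rw [RingHom.mem_ker, Ideal.Quotient.factor_mk, Ideal.Quotient.eq_zero_iff_mem] at hx
        exact Ideal.mem_map_of_mem _ hx
      refine le_bot_iff.mp ?_
      calc (RingHom.ker q) ^ (n + 1)
          ≤ (Ideal.map (Ideal.Quotient.mk (𝔪 ^ (n + 1))) 𝔪) ^ (n + 1) :=
            Ideal.pow_right_mono hle _
        _ = Ideal.map (Ideal.Quotient.mk (𝔪 ^ (n + 1))) (𝔪 ^ (n + 1)) :=
            (Ideal.map_pow _ _ _).symm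
        _ = ⊥ := Ideal.map_quotient_self _
    intro x hx
    have h1 : (μ : R ⊗[A] R →+* S) x ∈
        Ideal.map (μ : R ⊗[A] R →+* S) ((KaehlerDifferential.ideal A R) ^ (n + 1)) :=
      Ideal.mem_map_of_mem _ hx
    rw [Ideal.map_pow] at h1
    have h2 := Ideal.pow_right_mono hΔ (n + 1) h1
    rw [hbot] at h2
    exact h2
  let μbar : PrincipalParts A R n →+* S :=
    Ideal.Quotient.lift _ (μ : R ⊗[A] R →+* S) (fun a ha => hker ha)
  have hμbar : ∀ x : R ⊗[A] R, μbar (Ideal.Quotient.mk _ x) = μ x := fun x => rfl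
  -- `μ` is `R`-linear via `s`
  have hμ_smul : ∀ (r : R) (y : R ⊗[A] R), μ (r • y) = s r * μ y := by
    intro r y
    induction y using TensorProduct.induction_on with
    | zero => rw [smul_zero, map_zero, mul_zero]
    | tmul a b =>
        rw [TensorProduct.smul_tmul', hμ_tmul, hμ_tmul, smul_eq_mul, map_mul, mul_assoc]
    | add x y hx hy => rw [smul_add, map_add, map_add, hx, hy, mul_add]
  have hsmulP : ∀ (r : R) (p : PrincipalParts A R n), μbar (r • p) = s r * μbar p := by
    intro r p
    obtain ⟨x, rfl⟩ := Ideal.Quotient.mk_surjective p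
    have h1 : r • (Ideal.Quotient.mk (KaehlerDifferential.ideal A R ^ (n + 1)) x)
        = Ideal.Quotient.mk (KaehlerDifferential.ideal A R ^ (n + 1)) (r • x) := rfl
    rw [h1, hμbar, hμbar, hμ_smul]
  have hsmulk : ∀ (r : R) (c : k), t (r • c) = s r * t c := by
    intro r c
    obtain ⟨y, rfl⟩ := Ideal.Quotient.mk_surjective c
    have h1 : r • (Ideal.Quotient.mk 𝔪 y) = Ideal.Quotient.mk 𝔪 (r * y) := rfl
    rw [h1]
    show s (r * y) = s r * s y
    rw [map_mul]
  -- the bilinear pairing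
  let F : k →+ (PrincipalParts A R n) →+ S :=
    AddMonoidHom.mk'
      (fun c => AddMonoidHom.mk' (fun p => t c * μbar p)
        (fun p1 p2 => by
          show t c * μbar (p1 + p2) = t c * μbar p1 + t c * μbar p2
          rw [map_add, mul_add]))
      (fun c1 c2 => by
        ext p
        show t (c1 + c2) * μbar p = t c1 * μbar p + t c2 * μbar p
        rw [map_add, add_mul])
  have hbal : ∀ (r : R) (c : k) (p : PrincipalParts A R n), F (r • c) p = F c (r • p) := by
    intro r c p
    show t (r • c) * μbar p = t c * μbar (r • p)
    rw [hsmulk, hsmulP]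
    ring
  let Φ : k ⊗[R] PrincipalParts A R n →+ S := TensorProduct.liftAddHom F hbal
  have h0 : Φ (1 ⊗ₜ[R] univDiffOp A R n f) = 0 := by
    rw [hf]; exact Φ.map_zero
  rw [TensorProduct.liftAddHom_tmul] at h0
  have hval : F 1 (univDiffOp A R n f) = Ideal.Quotient.mk (𝔪 ^ (n + 1)) f := by
    show t 1 * μbar (Ideal.Quotient.mk _ ((1 : R) ⊗ₜ[A] f)) = _
    rw [map_one, one_mul, hμbar, hμ_tmul, map_one, one_mul]
  rw [hval] at h0
  exact Ideal.Quotient.eq_zero_iff_mem.mp h0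
end

section
/- Let A be any ring. For any local A-algebra (R, 𝔪, k) with residue field k = R/𝔪 and any n, the quotient map R → R/𝔪^{n+1} induces an isomorphism of k-modules R/𝔪 ⊗_R P^n_{(R/𝔪^{n+1})|A} ≅ R/𝔪 ⊗_R P^n_{R|A}. -/
open TensorProduct

namespace PrincipalPartsAux

variable (A : Type*) [CommRing A] (R : Type*) [CommRing R] [Algebra A R] (I : Ideal R)

/-- The map `R ⊗[A] R → (R/I) ⊗[A] (R/I)` as an `R`-algebra map. -/
noncomputable def piT : R ⊗[A] R →ₐ[R] (R ⧸ I) ⊗[A] (R ⧸ I) :=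
  Algebra.TensorProduct.map (Ideal.Quotient.mkₐ R I) (Ideal.Quotient.mkₐ A I)

lemma piT_tmul (x y : R) :
    piT A R I (x ⊗ₜ[A] y) = Ideal.Quotient.mk I x ⊗ₜ[A] Ideal.Quotient.mk I y := rfl

lemma piT_surjective : Function.Surjective (piT A R I) := by
  intro z
  induction z with
  | zero => exact ⟨0, map_zero _⟩
  | tmul x y =>
      obtain ⟨a, rfl⟩ := Ideal.Quotient.mk_surjective x
      obtain ⟨b, rfl⟩ := Ideal.Quotient.mk_surjective y
      exact ⟨a ⊗ₜ b, rfl⟩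
  | add x y hx hy =>
      obtain ⟨a, rfl⟩ := hx; obtain ⟨b, rfl⟩ := hy
      exact ⟨a + b, map_add _ _ _⟩

lemma lmul_piT (z : R ⊗[A] R) :
    Algebra.TensorProduct.lmul' A (S := R ⧸ I) (piT A R I z) =
      Ideal.Quotient.mk I (Algebra.TensorProduct.lmul' A (S := R) z) := by
  induction z with
  | zero => simp
  | tmul x y => simp [piT_tmul, Algebra.TensorProduct.lmul'_apply_tmul]
  | add x y hx hy => simp [map_add, hx, hy]

lemma ideal_eq_map :
    KaehlerDifferential.ideal A (R ⧸ I) =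
      Ideal.map (piT A R I) (KaehlerDifferential.ideal A R) := by
  apply le_antisymm
  · intro z hz
    obtain ⟨x, rfl⟩ := piT_surjective A R I z
    rw [RingHom.mem_ker, lmul_piT] at hz
    have hm : Algebra.TensorProduct.lmul' A (S := R) x ∈ I := Ideal.Quotient.eq_zero_iff_mem.mp hz
    have h1 : x - (Algebra.TensorProduct.lmul' A (S := R) x) ⊗ₜ[A] (1 : R) ∈
        KaehlerDifferential.ideal A R := by
      simp [RingHom.mem_ker, Algebra.TensorProduct.lmul'_apply_tmul]
    have h2 : piT A R I ((Algebra.TensorProduct.lmul' A (S := R) x) ⊗ₜ[A] (1 : R)) = 0 := by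
      rw [piT_tmul, Ideal.Quotient.eq_zero_iff_mem.mpr hm, TensorProduct.zero_tmul]
    have h3 := Ideal.mem_map_of_mem (piT A R I) h1
    rwa [map_sub, h2, sub_zero] at h3
  · rw [Ideal.map_le_iff_le_comap]
    intro x hx
    simp only [Ideal.mem_comap, RingHom.mem_ker] at *
    rw [lmul_piT, hx, map_zero]

/-- Auxiliary induction: `I^j ⊆ (Δ^j + 𝔪(R⊗R))` pulled back along `includeRight`. -/
lemma pow_le_comap_includeRight (j : ℕ) :
    I ^ j ≤ Ideal.comap (Algebra.TensorProduct.includeRight : R →ₐ[A] R ⊗[A] R)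
      (KaehlerDifferential.ideal A R ^ j ⊔
        Ideal.map (algebraMap R (R ⊗[A] R)) I) := by
  induction j with
  | zero =>
      simp [Ideal.one_eq_top]
  | succ j ih =>
      rw [pow_succ, Ideal.mul_le]
      intro r hr s hs
      rw [Ideal.mem_comap, map_mul]
      obtain ⟨d, hd, i, hi, hdi⟩ := Submodule.mem_sup.mp (Ideal.mem_comap.mp (ih hr))
      have hδ : (1 : R) ⊗ₜ[A] s - s ⊗ₜ[A] (1 : R) ∈ KaehlerDifferential.ideal A R :=
        KaehlerDifferential.one_smul_sub_smul_one_mem_ideal A s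
      have hs1 : (s ⊗ₜ[A] (1 : R)) ∈ Ideal.map (algebraMap R (R ⊗[A] R)) I := by
        have h := Ideal.mem_map_of_mem (algebraMap R (R ⊗[A] R)) hs
        rwa [Algebra.TensorProduct.algebraMap_apply] at h
      have key : (Algebra.TensorProduct.includeRight (R := A) (A := R) r : R ⊗[A] R) *
            Algebra.TensorProduct.includeRight s =
          d * ((1 : R) ⊗ₜ[A] s - s ⊗ₜ[A] (1 : R)) + (d * (s ⊗ₜ[A] (1 : R)) +
            i * ((1 : R) ⊗ₜ[A] s)) := by
        rw [Algebra.TensorProduct.includeRight_apply] at hdi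
        rw [Algebra.TensorProduct.includeRight_apply, Algebra.TensorProduct.includeRight_apply,
          ← hdi]
        ring
      rw [key]
      apply Submodule.add_mem
      · apply Ideal.mem_sup_left
        rw [pow_succ]
        exact Ideal.mul_mem_mul hd hδ
      · exact Ideal.mem_sup_right (Submodule.add_mem _
          (Ideal.mul_mem_left _ _ hs1) (Ideal.mul_mem_right _ _ hi))

lemma map_includeLeft_eq (J : Ideal R) :
    Ideal.map (Algebra.TensorProduct.includeLeft : R →ₐ[A] R ⊗[A] R) J =
      Ideal.map (algebraMap R (R ⊗[A] R)) J := rfl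

lemma ker_piT :
    RingHom.ker (piT A R I) =
      Ideal.map (Algebra.TensorProduct.includeLeft : R →ₐ[A] R ⊗[A] R) I ⊔
        Ideal.map (Algebra.TensorProduct.includeRight : R →ₐ[A] R ⊗[A] R) I := by
  have h : RingHom.ker (piT A R I) =
      RingHom.ker (Algebra.TensorProduct.map (Ideal.Quotient.mkₐ A I)
        (Ideal.Quotient.mkₐ A I)) := rfl
  have hk : RingHom.ker (Ideal.Quotient.mkₐ A I) = I := Ideal.Quotient.mkₐ_ker A I
  rw [h, Algebra.TensorProduct.map_ker _ _ (Ideal.Quotient.mkₐ_surjective A I)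
    (Ideal.Quotient.mkₐ_surjective A I), hk]

variable (n : ℕ)

/-- The induced map on principal parts. -/
noncomputable def fAux :
    PrincipalParts A R n →ₐ[R]
      ((R ⧸ I) ⊗[A] (R ⧸ I)) ⧸ (KaehlerDifferential.ideal A (R ⧸ I) ^ (n + 1)) :=
  Ideal.Quotient.liftₐ _
    ((Ideal.Quotient.mkₐ R (KaehlerDifferential.ideal A (R ⧸ I) ^ (n + 1))).comp (piT A R I))
    (fun a ha => by
      have h : piT A R I a ∈ KaehlerDifferential.ideal A (R ⧸ I) ^ (n + 1) := by
        rw [ideal_eq_map A R I, ← Ideal.map_pow]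
        exact Ideal.mem_map_of_mem _ ha
      show Ideal.Quotient.mkₐ R _ (piT A R I a) = 0
      rw [Ideal.Quotient.mkₐ_eq_mk]
      exact Ideal.Quotient.eq_zero_iff_mem.mpr h)

lemma fAux_mk (z : R ⊗[A] R) :
    fAux A R I n (Ideal.Quotient.mk (KaehlerDifferential.ideal A R ^ (n + 1)) z) =
      Ideal.Quotient.mk (KaehlerDifferential.ideal A (R ⧸ I) ^ (n + 1)) (piT A R I z) := rfl

lemma fAux_surjective : Function.Surjective (fAux A R I n) := by
  intro z
  obtain ⟨w, rfl⟩ := Ideal.Quotient.mk_surjective z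
  obtain ⟨x, rfl⟩ := piT_surjective A R I w
  exact ⟨Ideal.Quotient.mk _ x, rfl⟩

lemma ker_fAux_le (J : Ideal R) (hIJ : I ≤ J ^ (n + 1)) :
    LinearMap.ker (fAux A R I n).toLinearMap ≤
      J • (⊤ : Submodule R (PrincipalParts A R n)) := by
  intro z hz
  obtain ⟨x, rfl⟩ := Ideal.Quotient.mk_surjective z
  have hz0 : fAux A R I n (Ideal.Quotient.mk _ x) = 0 := hz
  rw [fAux_mk] at hz0
  have hz' : piT A R I x ∈ KaehlerDifferential.ideal A (R ⧸ I) ^ (n + 1) :=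
    Ideal.Quotient.eq_zero_iff_mem.mp hz0
  rw [ideal_eq_map A R I, ← Ideal.map_pow] at hz'
  obtain ⟨w, hw, hwx⟩ := (Ideal.mem_map_iff_of_surjective _ (piT_surjective A R I)).mp hz'
  have hker : RingHom.ker (piT A R I) ≤
      KaehlerDifferential.ideal A R ^ (n + 1) ⊔ Ideal.map (algebraMap R (R ⊗[A] R)) J := by
    rw [ker_piT]
    apply sup_le
    · refine le_trans ?_ le_sup_right
      rw [map_includeLeft_eq]
      exact Ideal.map_mono (le_trans hIJ (Ideal.pow_le_self (Nat.succ_ne_zero n)))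
    · rw [Ideal.map_le_iff_le_comap]
      exact le_trans hIJ (pow_le_comap_includeRight A R J (n + 1))
  have hxk : x - w ∈ RingHom.ker (piT A R I) := by
    rw [RingHom.mem_ker, map_sub, hwx, sub_self]
  have hx2 : x ∈ KaehlerDifferential.ideal A R ^ (n + 1) ⊔
      Ideal.map (algebraMap R (R ⊗[A] R)) J := by
    have : x = w + (x - w) := by ring
    rw [this]
    exact Submodule.add_mem _ (Ideal.mem_sup_left hw) (hker hxk)
  obtain ⟨d, hd, i, hi, hdi⟩ := Submodule.mem_sup.mp hx2
  rw [← hdi, map_add, Ideal.Quotient.eq_zero_iff_mem.mpr hd, zero_add]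
  rw [Ideal.smul_top_eq_map]
  have h2 := Ideal.mem_map_of_mem
    (Ideal.Quotient.mk (KaehlerDifferential.ideal A R ^ (n + 1))) hi
  rw [Ideal.map_map] at h2
  have h3 : (Ideal.Quotient.mk (KaehlerDifferential.ideal A R ^ (n + 1))).comp
      (algebraMap R (R ⊗[A] R)) = algebraMap R (PrincipalParts A R n) := rfl
  rw [h3] at h2
  exact h2

lemma tmul_eq_zero_of_mem_smul (M : Type*) [AddCommGroup M] [Module R M] (J : Ideal R)
    (c : R ⧸ J) (z : M) (hz : z ∈ J • (⊤ : Submodule R M)) :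
    c ⊗ₜ[R] z = (0 : (R ⧸ J) ⊗[R] M) := by
  refine Submodule.smul_induction_on hz ?_ ?_
  · intro r hr m _
    obtain ⟨c', rfl⟩ := Ideal.Quotient.mk_surjective c
    have hc : r • (Ideal.Quotient.mk J c') = 0 := by
      have : r • (Ideal.Quotient.mk J c') = Ideal.Quotient.mk J (r * c') := rfl
      rw [this]
      exact Ideal.Quotient.eq_zero_iff_mem.mpr (Ideal.mul_mem_right _ _ hr)
    rw [TensorProduct.tmul_smul, TensorProduct.smul_tmul', hc, TensorProduct.zero_tmul]
  · intro u v hu hv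
    rw [TensorProduct.tmul_add, hu, hv, add_zero]

end PrincipalPartsAux

set_option maxHeartbeats 1000000 in
/-- For any local `A`-algebra `(R, 𝔪, k)` and any `n`, the quotient map
`R → R/𝔪^{n+1}` induces an isomorphism
`k ⊗_R P^n_{R|A} ≅ k ⊗_R P^n_{(R/𝔪^{n+1})|A}`
(sending `c ⊗ (x ⊗ y)` to `c ⊗ (x̄ ⊗ ȳ)`). -/
theorem residue_tensor_principalParts_quotient_iso
    (A : Type*) [CommRing A] (R : Type*) [CommRing R] [Algebra A R] [IsLocalRing R]
    (n : ℕ) :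
    ∃ e :
      ((R ⧸ IsLocalRing.maximalIdeal R) ⊗[R] PrincipalParts A R n) ≃ₗ[R]
        ((R ⧸ IsLocalRing.maximalIdeal R) ⊗[R]
          PrincipalParts A (R ⧸ (IsLocalRing.maximalIdeal R) ^ (n + 1)) n),
      ∀ (c : R ⧸ IsLocalRing.maximalIdeal R) (x y : R),
        e (c ⊗ₜ[R]
            (Ideal.Quotient.mk (KaehlerDifferential.ideal A R ^ (n + 1)) (x ⊗ₜ[A] y))) =
          c ⊗ₜ[R]
            (Ideal.Quotient.mk
              (KaehlerDifferential.ideal A (R ⧸ (IsLocalRing.maximalIdeal R) ^ (n + 1))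
                ^ (n + 1))
              ((Ideal.Quotient.mk ((IsLocalRing.maximalIdeal R) ^ (n + 1)) x) ⊗ₜ[A]
                (Ideal.Quotient.mk ((IsLocalRing.maximalIdeal R) ^ (n + 1)) y))) := by
  classical
  set m := IsLocalRing.maximalIdeal R with hm
  let f := (PrincipalPartsAux.fAux A R (m ^ (n + 1)) n).toLinearMap
  have hsurj : Function.Surjective f := PrincipalPartsAux.fAux_surjective A R (m ^ (n + 1)) n
  have hker := PrincipalPartsAux.ker_fAux_le A R (m ^ (n + 1)) n m le_rfl
  have hzero : (LinearMap.lTensor (R ⧸ m) (LinearMap.ker f).subtype) = 0 := by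
    apply TensorProduct.ext'
    intro c z
    have hz : (z : PrincipalParts A R n) ∈ m • (⊤ : Submodule R (PrincipalParts A R n)) :=
      hker z.2
    simpa using PrincipalPartsAux.tmul_eq_zero_of_mem_smul R _ m c _ hz
  have hexact := lTensor_exact (R ⧸ m) (LinearMap.exact_subtype_ker_map f) hsurj
  have hinj : Function.Injective (LinearMap.lTensor (R ⧸ m) f) := by
    rw [← LinearMap.ker_eq_bot, hexact.linearMap_ker_eq, hzero, LinearMap.range_zero]
  refine ⟨LinearEquiv.ofBijective (LinearMap.lTensor (R ⧸ m) f)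
    ⟨hinj, LinearMap.lTensor_surjective _ hsurj⟩, ?_⟩
  intro c x y
  rfl
end

section
/- Let K be a field of characteristic p > 0, let R be a ring essentially of finite type over K, and let K_0 ⊆ K be a subfield such that K/K_0 admits a finite p-basis. Then the module of principal parts P^n_{R|K_0} is a finitely generated R-module for every n. -/
open TensorProduct

open Pointwise

lemma aux_pow_le {B : Type*} [CommRing B] (I : Ideal B) (s : Set B)
    (hsI : s ⊆ (I : Set B)) (hle : I ≤ Ideal.span s ⊔ I ^ 2) (k : ℕ) :
    I ^ k ≤ Ideal.span s ^ k ⊔ I ^ (k + 1) := by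
  have hJI : Ideal.span s ≤ I := Ideal.span_le.mpr hsI
  induction k with
  | zero => simp
  | succ k ih =>
    have h1 : I ^ (k + 1) = I * I ^ k := by rw [pow_succ, mul_comm]
    rw [h1]
    refine le_trans (Ideal.mul_mono hle ih) ?_
    rw [Ideal.sup_mul, Ideal.mul_sup, Ideal.mul_sup]
    have e1 : Ideal.span s * Ideal.span s ^ k ≤ Ideal.span s ^ (k + 1) :=
      le_of_eq (by rw [pow_succ, mul_comm])
    have e2 : Ideal.span s * I ^ (k + 1) ≤ I ^ (k + 2) :=
      le_trans (Ideal.mul_mono_left hJI) (le_of_eq (by ring))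
    have e3 : I ^ 2 * Ideal.span s ^ k ≤ I ^ (k + 2) := by
      refine le_trans (Ideal.mul_mono_right (Ideal.pow_right_mono hJI k)) (le_of_eq ?_)
      rw [← pow_add]; ring_nf
    have e4 : I ^ 2 * I ^ (k + 1) ≤ I ^ (k + 2) := by
      rw [← pow_add]
      exact Ideal.pow_le_pow_right (by omega)
    refine sup_le (sup_le ?_ ?_) (sup_le ?_ ?_)
    · exact e1.trans le_sup_left
    · exact e2.trans le_sup_right
    · exact e3.trans le_sup_right
    · exact e4.trans le_sup_right

lemma aux_finite_quotient {R B : Type*} [CommRing R] [CommRing B] [Algebra R B]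
    (I : Ideal B) (s : Set B) (hfin : s.Finite) (hsI : s ⊆ (I : Set B))
    (hle : I ≤ Ideal.span s ⊔ I ^ 2)
    (hsur : ∀ b : B, ∃ r : R, b - algebraMap R B r ∈ I) (n : ℕ) :
    Module.Finite R (B ⧸ I ^ (n + 1)) := by
  classical
  set q : B →ₗ[R] B ⧸ I ^ (n + 1) := (Ideal.Quotient.mkₐ R (I ^ (n + 1))).toLinearMap with hq
  set N : ℕ → Submodule R (B ⧸ I ^ (n + 1)) :=
    fun k => Submodule.map q ((I ^ k).restrictScalars R) with hN
  have hspanpow : ∀ k : ℕ, Ideal.span s ^ k = Ideal.span (s ^ k) := by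
    intro k
    induction k with
    | zero => rw [pow_zero, pow_zero, Ideal.one_eq_top, Ideal.span_one]
    | succ k ih => rw [pow_succ, ih, Ideal.span_mul_span', ← pow_succ]
  have hfinpow : ∀ k : ℕ, (s ^ k : Set B).Finite := by
    intro k
    induction k with
    | zero => rw [pow_zero]; exact Set.finite_one
    | succ k ih => rw [pow_succ]; exact ih.mul hfin
  have hpowle : ∀ k : ℕ, Ideal.span (s ^ k) ≤ I ^ k := by
    intro k
    rw [← hspanpow]
    exact Ideal.pow_right_mono (Ideal.span_le.mpr hsI) k
  have hNtop : N (n + 1) = ⊥ := by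
    rw [eq_bot_iff]
    rintro x ⟨y, hy, rfl⟩
    simp only [Submodule.mem_bot]
    exact Ideal.Quotient.eq_zero_iff_mem.mpr hy
  have key : ∀ k : ℕ, (N (k + 1)).FG → (N k).FG := by
    intro k hfg
    have hNk : N k = Submodule.span R (q '' (s ^ k : Set B)) ⊔ N (k + 1) := by
      apply le_antisymm
      · rintro _ ⟨y, hy, rfl⟩
        have hy2 : y ∈ Ideal.span (s ^ k) ⊔ I ^ (k + 1) := by
          rw [← hspanpow]
          exact aux_pow_le I s hsI hle k hy
        obtain ⟨a, ha, b, hb, hab⟩ := Submodule.mem_sup.mp hy2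
        rw [← hab, map_add]
        refine add_mem ?_ (Submodule.mem_sup_right ⟨b, hb, rfl⟩)
        refine Submodule.span_induction
          (p := fun a _ => q a ∈ Submodule.span R (q '' (s ^ k : Set B)) ⊔ N (k + 1))
          ?_ ?_ ?_ ?_ ha
        · intro x hx
          exact Submodule.mem_sup_left (Submodule.subset_span ⟨x, hx, rfl⟩)
        · simp
        · intro x y _ _ hx hy
          rw [map_add]; exact add_mem hx hy
        · intro c x hxmem hx
          obtain ⟨r, hr⟩ := hsur c
          have hxIk : x ∈ I ^ k := hpowle k hxmem
          have hcx : c • x = (c - algebraMap R B r) * x + r • x := by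
            rw [smul_eq_mul, Algebra.smul_def]
            ring
          rw [hcx, map_add]
          refine add_mem (Submodule.mem_sup_right ⟨_, ?_, rfl⟩) ?_
          · have hmul : (c - algebraMap R B r) * x ∈ I * I ^ k := Ideal.mul_mem_mul hr hxIk
            have heq : I * I ^ k = I ^ (k + 1) := by ring
            exact heq ▸ hmul
          · rw [map_smul]
            exact Submodule.smul_mem _ _ hx
      · refine sup_le ?_ ?_
        · rw [Submodule.span_le]
          rintro _ ⟨x, hx, rfl⟩
          exact ⟨x, hpowle k (Ideal.subset_span hx), rfl⟩
        · rintro _ ⟨y, hy, rfl⟩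
          exact ⟨y, Ideal.pow_le_pow_right (Nat.le_succ k) hy, rfl⟩
    rw [hNk]
    exact Submodule.FG.sup (Submodule.fg_span ((hfinpow k).image q)) hfg
  have main : ∀ j : ℕ, j ≤ n + 1 → (N (n + 1 - j)).FG := by
    intro j
    induction j with
    | zero => intro _; simpa [hNtop] using Submodule.fg_bot
    | succ j ih =>
      intro hj
      have hmm : n + 1 - j = (n + 1 - (j + 1)) + 1 := by omega
      exact key _ (hmm ▸ ih (by omega))
  have h0 : N 0 = ⊤ := by
    rw [hN]
    simp only [pow_zero, Ideal.one_eq_top]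
    rw [Submodule.restrictScalars_top, Submodule.map_top, LinearMap.range_eq_top]
    exact fun x => by
      obtain ⟨y, rfl⟩ := Ideal.Quotient.mk_surjective x
      exact ⟨y, rfl⟩
  rw [Module.finite_def, ← h0]
  simpa using main (n + 1) le_rfl


set_option maxHeartbeats 800000 in
theorem aux_main
    (p : ℕ) (hp : p.Prime) (K : Type*) [Field K] [CharP K p]
    (R : Type*) [CommRing R] [Algebra K R] [Algebra.EssFiniteType K R]
    (K₀ : Type*) [Field K₀] [Algebra K₀ K] [Algebra K₀ R] [IsScalarTower K₀ K R]
    (Θ : Finset K)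
    (hcl : Subfield.closure
      (Set.range (algebraMap K₀ K) ∪ Set.range (fun x : K => x ^ p) ∪ ↑Θ) = ⊤)
    (hR : Nontrivial R) :
    ∃ (G : Set (R ⊗[K₀] R)), G.Finite ∧ G ⊆ (KaehlerDifferential.ideal K₀ R : Set (R ⊗[K₀] R)) ∧
      KaehlerDifferential.ideal K₀ R ≤ Ideal.span G ⊔ (KaehlerDifferential.ideal K₀ R) ^ 2 := by
  classical
  haveI := Fact.mk hp
  set δ : R → R ⊗[K₀] R := fun x => 1 ⊗ₜ[K₀] x - x ⊗ₜ[K₀] 1 with hδ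
  set G : Set (R ⊗[K₀] R) :=
    δ '' (algebraMap K R '' ↑Θ ∪ ↑(Algebra.EssFiniteType.finset K R)) with hG
  set I : Ideal (R ⊗[K₀] R) := KaehlerDifferential.ideal K₀ R with hI
  set M : Submodule R (R ⊗[K₀] R) := (Ideal.span G ⊔ I ^ 2).restrictScalars R with hM
  have hδI : ∀ x : R, δ x ∈ I := fun x =>
    KaehlerDifferential.one_smul_sub_smul_one_mem_ideal K₀ x
  have hI2M : ∀ z ∈ (I ^ 2 : Ideal (R ⊗[K₀] R)), z ∈ M := fun z hz =>
    (le_sup_right : (I ^ 2 : Ideal (R ⊗[K₀] R)) ≤ Ideal.span G ⊔ I ^ 2) hz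
  have hGM : ∀ z ∈ G, z ∈ M := fun z hz =>
    (le_sup_left : Ideal.span G ≤ Ideal.span G ⊔ I ^ 2) (Ideal.subset_span hz)
  have hkey : ∀ x y : R, δ (x * y) = x • δ y + y • δ x + δ x * δ y := by
    intro x y
    simp only [hδ, smul_sub, TensorProduct.smul_tmul', smul_eq_mul, mul_one,
      sub_mul, mul_sub, Algebra.TensorProduct.tmul_mul_tmul, one_mul]
    rw [mul_comm y x]
    abel
  have hδmul : ∀ x y : R, δ x ∈ M → δ y ∈ M → δ (x * y) ∈ M := by
    intro x y hx hy
    rw [hkey]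
    refine add_mem (add_mem (Submodule.smul_mem _ _ hy) (Submodule.smul_mem _ _ hx)) ?_
    exact hI2M _ (by rw [pow_two]; exact Ideal.mul_mem_mul (hδI x) (hδI y))
  have hδunit : ∀ x t : R, IsUnit t → δ t ∈ M → δ (x * t) ∈ M → δ x ∈ M := by
    intro x t ht hδt hδxt
    obtain ⟨u, rfl⟩ := ht
    have h1 : (u : R) • δ x = δ (x * u) - x • δ ((u : R)) - δ x * δ ((u : R)) := by
      rw [hkey]; abel
    have h2 : δ x = ((u⁻¹ : Rˣ) : R) • ((u : R) • δ x) := by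
      rw [smul_smul, Units.inv_mul, one_smul]
    rw [h2, h1]
    refine Submodule.smul_mem _ _ (sub_mem (sub_mem hδxt (Submodule.smul_mem _ _ hδt)) ?_)
    exact hI2M _ (by rw [pow_two]; exact Ideal.mul_mem_mul (hδI x) (hδI _))
  -- characteristic p facts
  have hinjK : Function.Injective (algebraMap K R) := (algebraMap K R).injective
  haveI : CharP R p := charP_of_injective_algebraMap hinjK p
  have hinjR : Function.Injective (algebraMap R (R ⊗[K₀] R)) := by
    have : Function.LeftInverse (Algebra.TensorProduct.lmul' (R := K₀) (S := R))
        (algebraMap R (R ⊗[K₀] R)) := by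
      intro x
      simp [Algebra.TensorProduct.algebraMap_apply]
    exact this.injective
  haveI : CharP (R ⊗[K₀] R) p := charP_of_injective_ringHom hinjR p
  have hδpow : ∀ x : R, δ (x ^ p) ∈ M := by
    intro x
    have h1 : δ (x ^ p) = (δ x) ^ p := by
      rw [hδ]
      simp only []
      rw [sub_pow_char, Algebra.TensorProduct.tmul_pow, Algebra.TensorProduct.tmul_pow, one_pow]
    rw [h1]
    refine hI2M _ (Ideal.pow_le_pow_right hp.two_le ?_)
    exact Ideal.pow_mem_pow (hδI x) p
  -- elements of K₀ map to zero
  have hδK₀ : ∀ c : K₀, δ (algebraMap K₀ R c) = 0 := by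
    intro c
    have h1 : (1 : R) ⊗ₜ[K₀] (algebraMap K₀ R c) = (algebraMap K₀ R c) ⊗ₜ[K₀] (1 : R) := by
      rw [Algebra.algebraMap_eq_smul_one, TensorProduct.tmul_smul, TensorProduct.smul_tmul']
    rw [hδ]
    simp only [h1, sub_self]
  -- every element of K maps into M
  have hK : ∀ k : K, δ (algebraMap K R k) ∈ M := by
    intro k
    have hk : k ∈ Subfield.closure
        (Set.range (algebraMap K₀ K) ∪ Set.range (fun x : K => x ^ p) ∪ ↑Θ) := by
      rw [hcl]; trivial
    refine Subfield.closure_induction (p := fun x _ => δ (algebraMap K R x) ∈ M)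
      ?_ ?_ ?_ ?_ ?_ ?_ hk
    · rintro x ((⟨c, rfl⟩ | ⟨y, rfl⟩) | hx)
      · show δ (algebraMap K R (algebraMap K₀ K c)) ∈ M
        have : algebraMap K R (algebraMap K₀ K c) = algebraMap K₀ R c :=
          (IsScalarTower.algebraMap_apply K₀ K R c).symm
        rw [this, hδK₀]
        exact zero_mem M
      · show δ (algebraMap K R (y ^ p)) ∈ M
        rw [map_pow]
        exact hδpow _
      · show δ (algebraMap K R x) ∈ M
        exact hGM _ ⟨algebraMap K R x, Or.inl ⟨x, hx, rfl⟩, rfl⟩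
    · show δ (algebraMap K R 1) ∈ M
      rw [map_one]
      have : δ 1 = 0 := by rw [hδ]; simp
      rw [this]; exact zero_mem M
    · intro x y _ _ hx hy
      show δ (algebraMap K R (x + y)) ∈ M
      rw [map_add]
      have : δ (algebraMap K R x + algebraMap K R y)
          = δ (algebraMap K R x) + δ (algebraMap K R y) := by
        rw [hδ]; simp only [TensorProduct.tmul_add, TensorProduct.add_tmul]; abel
      rw [this]; exact add_mem hx hy
    · intro x _ hx
      show δ (algebraMap K R (-x)) ∈ M
      rw [map_neg]
      have : δ (-(algebraMap K R x)) = -δ (algebraMap K R x) := by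
        rw [hδ]; simp only [TensorProduct.tmul_neg, TensorProduct.neg_tmul]; abel
      rw [this]; exact neg_mem hx
    · intro x _ hx
      show δ (algebraMap K R x⁻¹) ∈ M
      rcases eq_or_ne x 0 with rfl | hx0
      · rwa [inv_zero]
      · refine hδunit _ (algebraMap K R x) (IsUnit.map _ (isUnit_iff_ne_zero.mpr hx0)) hx ?_
        rw [← map_mul, inv_mul_cancel₀ hx0, map_one]
        have : δ 1 = 0 := by rw [hδ]; simp
        rw [this]; exact zero_mem M
    · intro x y _ _ hx hy
      show δ (algebraMap K R (x * y)) ∈ M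
      rw [map_mul]
      exact hδmul _ _ hx hy
  -- every element of R maps into M
  have hall : ∀ x : R, δ x ∈ M := by
    intro x
    have hadj : ∀ y ∈ Algebra.adjoin K (↑(Algebra.EssFiniteType.finset K R) : Set R),
        δ y ∈ M := by
      intro y hy
      refine Algebra.adjoin_induction (p := fun y _ => δ y ∈ M) ?_ ?_ ?_ ?_ hy
      · intro z hz
        exact hGM _ ⟨z, Or.inr hz, rfl⟩
      · intro r; exact hK r
      · intro a b _ _ ha hb
        have : δ (a + b) = δ a + δ b := by
          rw [hδ]; simp only [TensorProduct.tmul_add, TensorProduct.add_tmul]; abel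
        rw [this]; exact add_mem ha hb
      · intro a b _ _ ha hb
        exact hδmul _ _ ha hb
    obtain ⟨t, ht, ht', hxt⟩ :=
      (Algebra.essFiniteType_cond_iff K R (Algebra.EssFiniteType.finset K R)).mp
        Algebra.EssFiniteType.cond.choose_spec x
    exact hδunit x t ht' (hadj t ht) (hadj _ hxt)
  refine ⟨G, ?_, ?_, ?_⟩
  · exact Set.Finite.image _ ((Θ.finite_toSet.image _).union
      (Algebra.EssFiniteType.finset K R).finite_toSet)
  · rintro _ ⟨x, _, rfl⟩
    exact hδI x
  · intro z hz
    have h1 : (KaehlerDifferential.ideal K₀ R).restrictScalars R ≤ M := by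
      rw [← KaehlerDifferential.submodule_span_range_eq_ideal]
      rw [Submodule.span_le]
      rintro _ ⟨x, rfl⟩
      exact hall x
    exact h1 hz


/-- A subfield `K₀ ⊆ K` such that the extension `K/K₀` admits a finite `p`-basis:
there is a finite set `Θ ⊆ K` with `K = K₀(K^p)(Θ)` such that the monomials in the
elements of `Θ` with exponents `< p` are linearly independent over `K₀(K^p)`. -/
def HasFinitePBasis (p : ℕ) {K : Type*} [Field K] (K₀ : Subfield K) : Prop :=
  ∃ Θ : Finset K,
    Subfield.closure ((K₀ : Set K) ∪ Set.range (fun x : K => x ^ p) ∪ ↑Θ) = ⊤ ∧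
    LinearIndependent
      (Subfield.closure ((K₀ : Set K) ∪ Set.range (fun x : K => x ^ p)))
      (fun e : {x : K // x ∈ Θ} → Fin p =>
        ∏ θ : {x : K // x ∈ Θ}, (θ : K) ^ ((e θ : ℕ)))

/-- If `K` is a field of characteristic `p > 0`, `R` is essentially of finite type
over `K`, and `K₀ ⊆ K` is a subfield such that `K/K₀` admits a finite `p`-basis,
then `P^n_{R|K₀}` is a finitely generated `R`-module for every `n`. -/
theorem principalParts_finite_of_finitePBasis
    (p : ℕ) (hp : p.Prime) (K : Type*) [Field K] [CharP K p]
    (R : Type*) [CommRing R] [Algebra K R] [Algebra.EssFiniteType K R]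
    (K₀ : Subfield K) (hK₀ : HasFinitePBasis p K₀) (n : ℕ) :
    letI : Algebra K₀ R := ((algebraMap K R).comp (algebraMap K₀ K)).toAlgebra
    Module.Finite R (PrincipalParts K₀ R n) := by
  classical
  letI : Algebra K₀ R := ((algebraMap K R).comp (algebraMap K₀ K)).toAlgebra
  haveI := IsScalarTower.of_algebraMap_eq (R := K₀) (S := K) (A := R) fun x => rfl
  show Module.Finite R (PrincipalParts K₀ R n)
  rcases subsingleton_or_nontrivial R with hR | hR
  · haveI : Subsingleton (PrincipalParts K₀ R n) := Module.subsingleton R _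
    exact Module.finite_def.mpr ⟨∅, Subsingleton.elim _ _⟩
  · obtain ⟨Θ, hcl, -⟩ := hK₀
    have hcl' : Subfield.closure
        (Set.range (algebraMap K₀ K) ∪ Set.range (fun x : K => x ^ p) ∪ ↑Θ) = ⊤ := by
      have hr : Set.range (algebraMap K₀ K) = (K₀ : Set K) := Subtype.range_coe
      rw [hr, hcl]
    obtain ⟨G, hfin, hsub, hle⟩ := aux_main p hp K R K₀ Θ hcl' hR
    refine aux_finite_quotient _ G hfin hsub hle ?_ n
    intro b
    refine ⟨Algebra.TensorProduct.lmul' (R := K₀) b, ?_⟩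
    rw [RingHom.mem_ker, map_sub, sub_eq_zero]
    simp [Algebra.TensorProduct.algebraMap_apply]
end
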